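/- arXiv:2505.21892 — 5 statements merged into one kernel-verified Lean document; each statement's English description precedes it below -/
import Mathlib

section
/- Let $f: \mathbb{R}^d \to \mathbb{R}$ be differentiable with $H$-Lipschitz gradient, and let $p \propto \exp(-f)$ be a probability density. Then $\mathbb{E}_{x\sim p}[\|\nabla f(x)\|^2] \le Hd$. -/
/-!
The descent lemma `f (x + v) ≤ f x + ⟪∇f x, v⟫ + H ‖v‖² / 2` and the translation invariance of
Lebesgue measure give the exponential moment bound
`∫ exp (-f - ⟪∇f, v⟫) ≤ exp (H ‖v‖² / 2) ∫ exp (-f)`.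
Applied at `v = ± s u` together with `2 + a² ≤ exp a + exp (-a)`, it bounds the second moment of
`⟪∇f, u⟫` under `exp (-f)` by `2 (exp (H s² ‖u‖² / 2) - 1) / s²` times the mass, which tends to
`H ‖u‖²` as `s → 0`. Summing over an orthonormal basis gives `H d`. Unlike the integration by parts
`E ‖∇f‖² = E Δf`, this needs no decay of `exp (-f)` at infinity.
-/

open MeasureTheory Real Filter Topology
open scoped NNReal ENNReal RealInnerProductSpace

theorem Real.two_add_sq_le_exp_add_exp_neg (a : ℝ) : 2 + a ^ 2 ≤ exp a + exp (-a) := by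
  have hsinh : (a / 2) ^ 2 ≤ sinh (a / 2) ^ 2 := by
    rw [← sq_abs, ← sq_abs (sinh _), abs_sinh]
    gcongr
    exact self_le_sinh_iff.2 (abs_nonneg _)
  have hcosh : cosh a = 1 + 2 * sinh (a / 2) ^ 2 := by
    have := cosh_two_mul (a / 2)
    rw [mul_div_cancel₀ a two_ne_zero, cosh_sq] at this
    linarith
  rw [cosh_eq] at hcosh
  nlinarith

theorem Real.exp_sub_one_le_mul_exp (t : ℝ) : exp t - 1 ≤ t * exp t := by
  have h := add_one_le_exp (-t)
  have hinv : exp (-t) * exp t = 1 := by rw [← exp_add, neg_add_cancel, exp_zero]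
  nlinarith [exp_pos t]

/-- The bound `M ≤ 2 c W` is the derivative in `s²` at `0` of the right-hand side of `h`. -/
theorem ENNReal.le_ofReal_mul_of_forall_two_add_le {M W : ℝ≥0∞} {c : ℝ} (hW : W ≠ ⊤) (hc : 0 ≤ c)
    (h : ∀ s : ℝ, 0 < s →
      2 * W + ENNReal.ofReal (s ^ 2) * M ≤ 2 * ENNReal.ofReal (exp (c * s ^ 2)) * W) :
    M ≤ ENNReal.ofReal (2 * c) * W := by
  have hstep : ∀ s : ℝ, 0 < s → M ≤ ENNReal.ofReal (2 * c * exp (c * s ^ 2)) * W := by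
    intro s hs
    have hs2 : 0 < s ^ 2 := by positivity
    have hexp : 2 * ENNReal.ofReal (exp (c * s ^ 2))
        ≤ 2 + ENNReal.ofReal (s ^ 2) * ENNReal.ofReal (2 * c * exp (c * s ^ 2)) := by
      rw [← ENNReal.ofReal_mul hs2.le, ← ENNReal.ofReal_ofNat 2,
        ← ENNReal.ofReal_mul zero_le_two, ← ENNReal.ofReal_add zero_le_two (by positivity)]
      refine ENNReal.ofReal_le_ofReal ?_
      nlinarith [exp_sub_one_le_mul_exp (c * s ^ 2)]
    have hadd : 2 * W + ENNReal.ofReal (s ^ 2) * M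
        ≤ 2 * W + ENNReal.ofReal (s ^ 2) * (ENNReal.ofReal (2 * c * exp (c * s ^ 2)) * W) :=
      calc _ ≤ 2 * ENNReal.ofReal (exp (c * s ^ 2)) * W := h s hs
        _ ≤ (2 + ENNReal.ofReal (s ^ 2) * ENNReal.ofReal (2 * c * exp (c * s ^ 2))) * W := by
          gcongr
        _ = _ := by ring
    have hmul := ENNReal.le_of_add_le_add_left (ENNReal.mul_ne_top ENNReal.ofNat_ne_top hW) hadd
    exact (ENNReal.mul_le_mul_iff_right (by simpa using hs.ne') ENNReal.ofReal_ne_top).1 hmul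
  have hlim : Tendsto (fun s : ℝ => ENNReal.ofReal (2 * c * exp (c * s ^ 2)) * W) (𝓝[>] 0)
      (𝓝 (ENNReal.ofReal (2 * c) * W)) := by
    have hcont : Continuous fun s : ℝ => ENNReal.ofReal (2 * c * exp (c * s ^ 2)) * W :=
      (ENNReal.continuous_mul_const hW).comp (ENNReal.continuous_ofReal.comp (by fun_prop))
    simpa using (hcont.tendsto 0).mono_left nhdsWithin_le_nhds
  exact ge_of_tendsto hlim (eventually_nhdsWithin_of_forall hstep)

theorem two_mul_lintegral_exp_neg_add_lintegral_sq_le {α : Type*} [MeasurableSpace α]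
    (μ : Measure α) {f g : α → ℝ} (hf : Measurable f) (hg : Measurable g) (s : ℝ) :
    2 * ∫⁻ x, ENNReal.ofReal (exp (-f x)) ∂μ
        + ENNReal.ofReal (s ^ 2) * ∫⁻ x, ENNReal.ofReal (g x ^ 2 * exp (-f x)) ∂μ
      ≤ ∫⁻ x, ENNReal.ofReal (exp (-f x - s * g x)) ∂μ
        + ∫⁻ x, ENNReal.ofReal (exp (-f x - (-s) * g x)) ∂μ := by
  have hpoint : ∀ x, 2 * ENNReal.ofReal (exp (-f x))
        + ENNReal.ofReal (s ^ 2) * ENNReal.ofReal (g x ^ 2 * exp (-f x))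
      ≤ ENNReal.ofReal (exp (-f x - s * g x)) + ENNReal.ofReal (exp (-f x - (-s) * g x)) := by
    intro x
    rw [← ENNReal.ofReal_ofNat 2, ← ENNReal.ofReal_mul zero_le_two,
      ← ENNReal.ofReal_mul (by positivity), ← ENNReal.ofReal_add (by positivity) (by positivity),
      ← ENNReal.ofReal_add (by positivity) (by positivity)]
    refine ENNReal.ofReal_le_ofReal ?_
    have := two_add_sq_le_exp_add_exp_neg (s * g x)
    simp only [sub_eq_add_neg, exp_add, neg_mul, neg_neg]
    nlinarith [exp_pos (-f x)]
  calc _ ≤ ∫⁻ x, 2 * ENNReal.ofReal (exp (-f x))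
        + ENNReal.ofReal (s ^ 2) * ENNReal.ofReal (g x ^ 2 * exp (-f x)) ∂μ := by
        rw [← lintegral_const_mul' _ _ ENNReal.ofNat_ne_top,
          ← lintegral_const_mul' _ _ ENNReal.ofReal_ne_top]
        exact le_lintegral_add _ _
    _ ≤ _ := lintegral_mono hpoint
    _ = _ := lintegral_add_left (by fun_prop) _

section LipschitzGradient

variable {E : Type*} [NormedAddCommGroup E] [InnerProductSpace ℝ E] [CompleteSpace E]
  {f : E → ℝ} {K : ℝ≥0}

theorem apply_add_le_of_lipschitzWith_gradient (hf : Differentiable ℝ f)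
    (hK : LipschitzWith K (gradient f)) (x v : E) :
    f (x + v) ≤ f x + ⟪gradient f x, v⟫ + K / 2 * ‖v‖ ^ 2 := by
  have hline : ∀ t : ℝ, HasDerivAt (fun t : ℝ => f (x + t • v)) ⟪gradient f (x + t • v), v⟫ t := by
    intro t
    have hv : HasDerivAt (fun t : ℝ => x + t • v) v t := by
      simpa using ((hasDerivAt_id t).smul_const v).const_add x
    rw [inner_gradient_left]
    exact (hf _).hasFDerivAt.comp_hasDerivAt t hv
  have hslope : ∀ t, 0 ≤ t → ⟪gradient f (x + t • v), v⟫ ≤ ⟪gradient f x, v⟫ + K * ‖v‖ ^ 2 * t := by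
    intro t ht
    have hdist : ‖gradient f (x + t • v) - gradient f x‖ ≤ K * (t * ‖v‖) := by
      simpa [dist_eq_norm, norm_smul, abs_of_nonneg ht] using hK.dist_le_mul (x + t • v) x
    have := real_inner_le_norm (gradient f (x + t • v) - gradient f x) v
    rw [inner_sub_left] at this
    nlinarith [norm_nonneg v]
  have := image_le_of_deriv_right_le_deriv_boundary (a := 0) (b := 1)
    (B := fun t => f x + t * ⟪gradient f x, v⟫ + K / 2 * ‖v‖ ^ 2 * t ^ 2)
    (fun t _ => (hline t).continuousAt.continuousWithinAt)
    (fun t _ => (hline t).hasDerivWithinAt) (by simp) (by fun_prop)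
    (fun t _ => by
      have := (((hasDerivAt_id t).mul_const ⟪gradient f x, v⟫).const_add (f x)).add
        (((hasDerivAt_pow 2 t).const_mul (K / 2 * ‖v‖ ^ 2)))
      exact this.hasDerivWithinAt)
    (fun t ht => (hslope t ht.1).trans_eq (by ring)) ⟨zero_le_one, le_rfl⟩
  simpa using this

variable [MeasurableSpace E] [MeasurableAdd E] (μ : Measure E) [μ.IsAddRightInvariant]

theorem lintegral_exp_neg_sub_inner_gradient_le (hf : Differentiable ℝ f)
    (hK : LipschitzWith K (gradient f)) (v : E) :
    ∫⁻ x, ENNReal.ofReal (exp (-f x - ⟪gradient f x, v⟫)) ∂μ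
      ≤ ENNReal.ofReal (exp (K / 2 * ‖v‖ ^ 2)) * ∫⁻ x, ENNReal.ofReal (exp (-f x)) ∂μ :=
  calc _ ≤ ∫⁻ x, ENNReal.ofReal (exp (K / 2 * ‖v‖ ^ 2)) * ENNReal.ofReal (exp (-f (x + v))) ∂μ := by
        refine lintegral_mono fun x => ?_
        rw [← ENNReal.ofReal_mul (exp_pos _).le, ← exp_add]
        gcongr
        linarith [apply_add_le_of_lipschitzWith_gradient hf hK x v]
    _ = _ := by
        rw [lintegral_const_mul' _ _ ENNReal.ofReal_ne_top,
          lintegral_add_right_eq_self (fun x => ENNReal.ofReal (exp (-f x))) v]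

variable [OpensMeasurableSpace E]

theorem lintegral_inner_gradient_sq_mul_exp_neg_le (hf : Differentiable ℝ f)
    (hK : LipschitzWith K (gradient f)) (hW : ∫⁻ x, ENNReal.ofReal (exp (-f x)) ∂μ ≠ ⊤) (u : E) :
    ∫⁻ x, ENNReal.ofReal (⟪gradient f x, u⟫ ^ 2 * exp (-f x)) ∂μ
      ≤ ENNReal.ofReal (K * ‖u‖ ^ 2) * ∫⁻ x, ENNReal.ofReal (exp (-f x)) ∂μ := by
  set W := ∫⁻ x, ENNReal.ofReal (exp (-f x)) ∂μ
  refine (ENNReal.le_ofReal_mul_of_forall_two_add_le hW (c := K * ‖u‖ ^ 2 / 2) (by positivity)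
    fun s hs => ?_).trans_eq (by congr 2; ring)
  have hmgf : ∀ σ : ℝ, |σ| = s → ∫⁻ x, ENNReal.ofReal (exp (-f x - σ * ⟪gradient f x, u⟫)) ∂μ
      ≤ ENNReal.ofReal (exp (K * ‖u‖ ^ 2 / 2 * s ^ 2)) * W := by
    intro σ hσ
    simp_rw [← inner_smul_right]
    refine (lintegral_exp_neg_sub_inner_gradient_le μ hf hK _).trans_eq ?_
    congr 3
    rw [norm_smul, Real.norm_eq_abs, hσ]; ring
  calc _ ≤ _ := two_mul_lintegral_exp_neg_add_lintegral_sq_le μ hf.continuous.measurable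
        (hK.continuous.inner continuous_const).measurable s
    _ ≤ _ := add_le_add (hmgf s (abs_of_pos hs)) (hmgf (-s) (by rw [abs_neg, abs_of_pos hs]))
    _ = _ := by ring

theorem lintegral_norm_gradient_sq_mul_exp_neg_le [FiniteDimensional ℝ E]
    (hf : Differentiable ℝ f) (hK : LipschitzWith K (gradient f))
    (hW : ∫⁻ x, ENNReal.ofReal (exp (-f x)) ∂μ ≠ ⊤) :
    ∫⁻ x, ENNReal.ofReal (‖gradient f x‖ ^ 2 * exp (-f x)) ∂μ
      ≤ ENNReal.ofReal (K * Module.finrank ℝ E) * ∫⁻ x, ENNReal.ofReal (exp (-f x)) ∂μ := by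
  have hfc : Continuous f := hf.continuous
  have hG : Continuous (gradient f) := hK.continuous
  set b := stdOrthonormalBasis ℝ E
  calc _ = ∑ i, ∫⁻ x, ENNReal.ofReal (⟪gradient f x, b i⟫ ^ 2 * exp (-f x)) ∂μ := by
        rw [← lintegral_finsetSum _ fun i _ => by fun_prop]
        refine lintegral_congr fun x => ?_
        rw [← b.sum_sq_inner_left, Finset.sum_mul,
          ENNReal.ofReal_sum_of_nonneg fun i _ => by positivity]
    _ ≤ ∑ i, ENNReal.ofReal K * ∫⁻ x, ENNReal.ofReal (exp (-f x)) ∂μ :=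
        Finset.sum_le_sum fun i _ =>
          (lintegral_inner_gradient_sq_mul_exp_neg_le μ hf hK hW (b i)).trans_eq
            (by rw [b.orthonormal.1 i]; simp)
    _ = _ := by
        rw [Finset.sum_const, Finset.card_univ, Fintype.card_fin, nsmul_eq_mul,
          ENNReal.ofReal_mul NNReal.zero_le_coe, ENNReal.ofReal_natCast]
        ring

end LipschitzGradient

/-- If `f : ℝ^d → ℝ` is differentiable with `H`-Lipschitz gradient and
`p ∝ exp (-f)` is a probability density, then `E_p[‖∇ f‖²] ≤ H d`. -/
theorem expected_sq_grad_le
    (d : ℕ) (H Z : ℝ) (hH : 0 < H) (hZ : 0 < Z)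
    (f : EuclideanSpace ℝ (Fin d) → ℝ)
    (hdiff : Differentiable ℝ f)
    (hlip : LipschitzWith (Real.toNNReal H) (fun x => gradient f x))
    (hZint : ∫ x, Real.exp (-(f x)) = Z) :
    ∫ x, ‖gradient f x‖ ^ 2 * (Real.exp (-(f x)) / Z) ≤ H * d := by
  have hint : Integrable fun x => exp (-f x) := Integrable.of_integral_ne_zero (hZint ▸ hZ.ne')
  have hW : ∫⁻ x, ENNReal.ofReal (exp (-f x)) = ENNReal.ofReal Z := by
    rw [← ofReal_integral_eq_lintegral_ofReal hint (ae_of_all _ fun x => (exp_pos _).le), hZint]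
  have hmain :=
    lintegral_norm_gradient_sq_mul_exp_neg_le volume hdiff hlip (hW ▸ ENNReal.ofReal_ne_top)
  rw [hW, Real.coe_toNNReal H hH.le, finrank_euclideanSpace_fin] at hmain
  simp_rw [← mul_div_assoc]
  rw [integral_div, div_le_iff₀ hZ]
  calc ∫ x, ‖gradient f x‖ ^ 2 * exp (-f x)
      = (∫⁻ x, ENNReal.ofReal (‖gradient f x‖ ^ 2 * exp (-f x))).toReal := by
        have := hlip.continuous
        have := hdiff.continuous
        exact integral_eq_lintegral_of_nonneg_ae (ae_of_all _ fun x => by positivity)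
          (by fun_prop)
    _ ≤ (ENNReal.ofReal (H * d) * ENNReal.ofReal Z).toReal :=
        ENNReal.toReal_mono (ENNReal.mul_ne_top ENNReal.ofReal_ne_top ENNReal.ofReal_ne_top) hmain
    _ = H * d * Z := by
        rw [← ENNReal.ofReal_mul (by positivity), ENNReal.toReal_ofReal (by positivity)]
end

section
/- (Modified log-Sobolev inequality for the hypercube flip chain.) Let $q_\infty$ be the uniform distribution on $\{0,1\}^n$ and let $\mathcal{L}$ be the generator $\mathcal{L}[f](y) = \sum_{i=0}^{n-1} (f(y \oplus e_i) - f(y))$, where $y \oplus e_i$ flips bit $i$. For any positive function $f: \{0,1\}^n \to (0,\infty)$, $\mathrm{Ent}_{q_\infty}[f] \le \mathcal{E}(f, \ln f)$, where $\mathrm{Ent}_{q_\infty}[f] = \mathbb{E}_{q_\infty}[f \ln f] - \mathbb{E}_{q_\infty}[f]\ln\mathbb{E}_{q_\infty}[f]$ and $\mathcal{E}(f,g) = -\mathbb{E}_{q_\infty}[f\,\mathcal{L}g]$ is the Dirichlet form. -/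
/-!
Tensorize over the first coordinate. Splitting `f` into its two slices `f₀, f₁` on
`{0,1}ⁿ`, the entropy is the sum of the slice entropies plus the two-point entropy of the
masses `A = ∑ f₀`, `B = ∑ f₁`, while the Dirichlet form is the sum of the slice Dirichlet
forms plus the cross term `∑ (f₀ - f₁)(log f₀ - log f₁)`. Concavity of `log` bounds the
two-point entropy by `(A - B)(log A - log B) / 2`, and since `(a, b) ↦ (a - b)(log a - log b)`
is subadditive (log-sum inequality) and nonnegative, this is at most the cross term.
-/

open Real Finset

namespace Real

lemma sum_mul_log_sub_log_sum_le {ι : Type*} [Fintype ι] [Nonempty ι] (a b : ι → ℝ)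
    (ha : ∀ i, 0 < a i) (hb : ∀ i, 0 < b i) :
    (∑ i, a i) * (log (∑ i, a i) - log (∑ i, b i))
      ≤ ∑ i, a i * (log (a i) - log (b i)) := by
  set A := ∑ i, a i
  set B := ∑ i, b i
  have hA : 0 < A := sum_pos (fun i _ => ha i) univ_nonempty
  have hB : 0 < B := sum_pos (fun i _ => hb i) univ_nonempty
  have tangent : ∀ i,
      a i * (log A - log B) ≤ a i * (log (a i) - log (b i)) + b i * (A / B) - a i := by
    intro i
    have hai := ha i
    have hbi := hb i
    have h := mul_le_mul_of_nonneg_left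
      (log_le_sub_one_of_pos (x := b i * A / (a i * B)) (by positivity)) hai.le
    rw [log_div (by positivity) (by positivity), log_mul hbi.ne' hA.ne',
      log_mul hai.ne' hB.ne'] at h
    have h_rhs : a i * (b i * A / (a i * B) - 1) = b i * (A / B) - a i := by field_simp
    linarith
  calc A * (log A - log B) = ∑ i, a i * (log A - log B) := by rw [sum_mul]
    _ ≤ ∑ i, (a i * (log (a i) - log (b i)) + b i * (A / B) - a i) :=
      sum_le_sum fun i _ => tangent i
    _ = ∑ i, a i * (log (a i) - log (b i)) := by
      rw [sum_sub_distrib, sum_add_distrib, ← sum_mul, mul_div_cancel₀ A hB.ne',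
        add_sub_cancel_right]

lemma sub_mul_log_sub_log_nonneg {x y : ℝ} (hx : 0 < x) (hy : 0 < y) :
    0 ≤ (x - y) * (log x - log y) := by
  rcases le_total x y with h | h
  · exact mul_nonneg_of_nonpos_of_nonpos (sub_nonpos.2 h) (sub_nonpos.2 (log_le_log hx h))
  · exact mul_nonneg (sub_nonneg.2 h) (sub_nonneg.2 (log_le_log hy h))

lemma sub_mul_log_sub_log_sum_le {ι : Type*} [Fintype ι] [Nonempty ι] (a b : ι → ℝ)
    (ha : ∀ i, 0 < a i) (hb : ∀ i, 0 < b i) :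
    (∑ i, a i - ∑ i, b i) * (log (∑ i, a i) - log (∑ i, b i))
      ≤ ∑ i, (a i - b i) * (log (a i) - log (b i)) := by
  have hab := sum_mul_log_sub_log_sum_le a b ha hb
  have hba := sum_mul_log_sub_log_sum_le b a hb ha
  calc (∑ i, a i - ∑ i, b i) * (log (∑ i, a i) - log (∑ i, b i))
      = (∑ i, a i) * (log (∑ i, a i) - log (∑ i, b i))
        + (∑ i, b i) * (log (∑ i, b i) - log (∑ i, a i)) := by ring
    _ ≤ ∑ i, a i * (log (a i) - log (b i)) + ∑ i, b i * (log (b i) - log (a i)) :=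
      add_le_add hab hba
    _ = ∑ i, (a i - b i) * (log (a i) - log (b i)) := by
      rw [← sum_add_distrib]; exact sum_congr rfl fun i _ => by ring

lemma two_point_entropy_le {A B : ℝ} (hA : 0 < A) (hB : 0 < B) :
    A * log A + B * log B - (A + B) * (log (A + B) - log 2)
      ≤ (A - B) * (log A - log B) / 2 := by
  have hmid : (log A + log B) / 2 ≤ log (A + B) - log 2 := by
    have h := strictConcaveOn_log_Ioi.concaveOn.2 (Set.mem_Ioi.2 hA) (Set.mem_Ioi.2 hB)
      (by norm_num : (0 : ℝ) ≤ 1 / 2) (by norm_num : (0 : ℝ) ≤ 1 / 2) (by norm_num)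
    simp only [smul_eq_mul] at h
    rw [show 1 / 2 * A + 1 / 2 * B = (A + B) / 2 by ring, log_div (by positivity) two_ne_zero] at h
    linarith
  linarith [mul_le_mul_of_nonneg_left hmid (by positivity : (0 : ℝ) ≤ A + B)]

end Real

namespace Hypercube

variable {n : ℕ}

def flipBit (i : Fin n) (y : Fin n → Bool) : Fin n → Bool := Function.update y i (!y i)

lemma flipBit_cons_zero (b : Bool) (z : Fin n → Bool) :
    flipBit 0 (Fin.cons b z : Fin (n + 1) → Bool) = Fin.cons (!b) z := by
  rw [flipBit, Fin.cons_zero, Fin.update_cons_zero]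

lemma flipBit_cons_succ (b : Bool) (z : Fin n → Bool) (i : Fin n) :
    flipBit i.succ (Fin.cons b z : Fin (n + 1) → Bool) = Fin.cons b (flipBit i z) := by
  rw [flipBit, flipBit, Fin.cons_succ, Fin.cons_update]

lemma sum_univ_succ (g : (Fin (n + 1) → Bool) → ℝ) :
    ∑ y, g y = ∑ z, g (Fin.cons false z) + ∑ z, g (Fin.cons true z) := by
  rw [← (Fin.consEquiv fun _ => Bool).sum_comp, Fintype.sum_prod_type, Fintype.sum_bool, add_comm]
  rfl

/-- `2ⁿ · Ent[f]` for the uniform distribution on `{0,1}ⁿ`. -/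
noncomputable def entropy (f : (Fin n → Bool) → ℝ) : ℝ :=
  ∑ y, f y * log (f y) - (∑ y, f y) * (log (∑ y, f y) - n * log 2)

/-- `2ⁿ · ℰ(f, log f)` for the flip chain. -/
noncomputable def dirichlet (f : (Fin n → Bool) → ℝ) : ℝ :=
  ∑ y, ∑ i, f y * (log (f y) - log (f (flipBit i y)))

lemma entropy_succ (f : (Fin (n + 1) → Bool) → ℝ) :
    let A := ∑ z, f (Fin.cons false z)
    let B := ∑ z, f (Fin.cons true z)
    entropy f = entropy (fun z => f (Fin.cons false z)) + entropy (fun z => f (Fin.cons true z))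
      + (A * log A + B * log B - (A + B) * (log (A + B) - log 2)) := by
  simp only [entropy]
  rw [sum_univ_succ f, sum_univ_succ fun y => f y * log (f y)]
  push_cast
  ring

lemma dirichlet_succ (f : (Fin (n + 1) → Bool) → ℝ) :
    dirichlet f
      = dirichlet (fun z => f (Fin.cons false z)) + dirichlet (fun z => f (Fin.cons true z))
      + ∑ z, (f (Fin.cons false z) - f (Fin.cons true z))
          * (log (f (Fin.cons false z)) - log (f (Fin.cons true z))) := by
  simp only [dirichlet]
  rw [sum_univ_succ]
  simp only [Fin.sum_univ_succ, flipBit_cons_zero, flipBit_cons_succ, Bool.not_false,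
    Bool.not_true, sum_add_distrib]
  have cross : ∀ z, (f (Fin.cons false z) - f (Fin.cons true z))
      * (log (f (Fin.cons false z)) - log (f (Fin.cons true z)))
      = f (Fin.cons false z) * (log (f (Fin.cons false z)) - log (f (Fin.cons true z)))
        + f (Fin.cons true z) * (log (f (Fin.cons true z)) - log (f (Fin.cons false z))) :=
    fun z => by ring
  simp only [cross, sum_add_distrib]
  ring

theorem entropy_le_dirichlet (f : (Fin n → Bool) → ℝ) (hf : ∀ y, 0 < f y) :
    entropy f ≤ dirichlet f := by
  induction n with
  | zero => simp [entropy, dirichlet]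
  | succ n ih =>
    set f₀ : (Fin n → Bool) → ℝ := fun z => f (Fin.cons false z)
    set f₁ : (Fin n → Bool) → ℝ := fun z => f (Fin.cons true z)
    have hf₀ : ∀ z, 0 < f₀ z := fun z => hf _
    have hf₁ : ∀ z, 0 < f₁ z := fun z => hf _
    have two_point := two_point_entropy_le (sum_pos (fun z _ => hf₀ z) univ_nonempty)
      (sum_pos (fun z _ => hf₁ z) univ_nonempty)
    have cross := sub_mul_log_sub_log_sum_le f₀ f₁ hf₀ hf₁
    have cross_nonneg : 0 ≤ ∑ z, (f₀ z - f₁ z) * (log (f₀ z) - log (f₁ z)) :=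
      sum_nonneg fun z _ => sub_mul_log_sub_log_nonneg (hf₀ z) (hf₁ z)
    rw [entropy_succ, dirichlet_succ]
    linarith [ih f₀ hf₀, ih f₁ hf₁]

end Hypercube

/-- Modified log-Sobolev inequality for the hypercube flip chain:
`Ent_{unif}[f] ≤ ℰ(f, ln f)` for every positive `f`. -/
theorem hypercube_mlsi
    (n : ℕ) (f : (Fin n → Bool) → ℝ) (hf : ∀ y, 0 < f y)
    (flip : Fin n → (Fin n → Bool) → (Fin n → Bool))
    (hflip : ∀ i y, flip i y = Function.update y i (!(y i)))
    (L : ((Fin n → Bool) → ℝ) → ((Fin n → Bool) → ℝ))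
    (hL : ∀ g y, L g y = ∑ i : Fin n, (g (flip i y) - g y))
    (E : ((Fin n → Bool) → ℝ) → ℝ)
    (hE : ∀ g : (Fin n → Bool) → ℝ,
      E g = (2 : ℝ) ^ (-(n : ℤ)) * ∑ y, g y)
    (Ent : ℝ) (hEnt : Ent = E (fun y => f y * Real.log (f y)) - E f * Real.log (E f))
    (Dir : ℝ) (hDir : Dir = -(E (fun y => f y * L (fun z => Real.log (f z)) y))) :
    Ent ≤ Dir := by
  have hw : (0 : ℝ) < 2 ^ (-(n : ℤ)) := by positivity
  have hEnt' : Ent = 2 ^ (-(n : ℤ)) * Hypercube.entropy f := by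
    rw [hEnt, hE, hE, log_mul hw.ne' (sum_pos (fun y _ => hf y) univ_nonempty).ne', log_zpow,
      Hypercube.entropy]
    push_cast
    ring
  have hDir' : Dir = 2 ^ (-(n : ℤ)) * Hypercube.dirichlet f := by
    simp only [hDir, hE, hL, hflip, Hypercube.dirichlet, Hypercube.flipBit, mul_sum,
      ← sum_neg_distrib]
    congr 1; ext y; congr 1; ext i; ring
  rw [hEnt', hDir']
  exact mul_le_mul_of_nonneg_left (Hypercube.entropy_le_dirichlet f hf) hw.le
end

section
/- (Tensorization/sub-additivity of entropy.) Let $X_1, \ldots, X_n$ be independent random variables taking values in a countable set $\mathcal{X}$, let $f: \mathcal{X}^n \to [0,\infty)$, and let $\Phi(x) = x \ln x$ (with $\Phi(0)=0$). Then $\mathbb{E}[\Phi(f(X_1,\ldots,X_n))] - \Phi(\mathbb{E}[f(X_1,\ldots,X_n)]) \le \sum_{i=1}^n \mathbb{E}\big[\mathbb{E}_{X_i}[\Phi(f)] - \Phi(\mathbb{E}_{X_i}[f])\big]$, where $\mathbb{E}_{X_i}$ denotes expectation over $X_i$ alone with the other variables fixed. -/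
/-!
Split off the first coordinate. The entropy of `F` under `ρ ⊗ σ` is the `ρ`-average of the
entropies of the slices `F(a, ·)` plus the entropy of the marginal `h(a) = ∫ F(a, ·) dσ`. By
Gibbs' inequality `a - c ≤ a log a - a log c`, applied with `c = h(a) m(b) / E` where `m` is the
other marginal and `E` the mean of `F`, the entropy of `h` is at most the `σ`-average of the
entropies of the slices `F(·, b)`. Induction on the number of coordinates finishes the proof.
-/

open MeasureTheory Real

noncomputable def entropy {α : Type*} [MeasurableSpace α] (μ : Measure α) (g : α → ℝ) : ℝ :=
  (∫ x, g x * log (g x) ∂μ) - (∫ x, g x ∂μ) * log (∫ x, g x ∂μ)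

theorem sub_le_mul_log_sub_mul_log {a c : ℝ} (ha : 0 ≤ a) (hc : 0 < c) :
    a - c ≤ a * log a - a * log c := by
  rcases ha.eq_or_lt with rfl | ha
  · simpa using hc.le
  have h := mul_le_mul_of_nonneg_left (self_sub_one_le_mul_log (div_pos ha hc).le) hc.le
  rw [log_div ha.ne' hc.ne'] at h
  field_simp at h
  linarith

theorem mul_log_add_mul_log_add_sub_div_le {a x y e : ℝ} (ha : 0 ≤ a) (hx : 0 ≤ x) (hy : 0 ≤ y)
    (he : 0 ≤ e) (hpos : 0 < a → 0 < x ∧ 0 < y ∧ 0 < e) :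
    a * log x + a * log y + (a - x * y / e) ≤ a * log a + a * log e := by
  rcases ha.eq_or_lt with rfl | ha
  · simp only [zero_mul, zero_add, zero_sub, neg_nonpos]
    positivity
  obtain ⟨hx, hy, he⟩ := hpos ha
  have h := sub_le_mul_log_sub_mul_log ha.le (div_pos (mul_pos hx hy) he)
  rw [log_div (mul_pos hx hy).ne' he.ne', log_mul hx.ne' hy.ne'] at h
  linarith

section General

variable {α β : Type*} [MeasurableSpace α] [MeasurableSpace β]

theorem entropy_nonneg {μ : Measure α} [IsProbabilityMeasure μ] {g : α → ℝ} (hg0 : ∀ x, 0 ≤ g x)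
    (hg : Integrable g μ) (hgl : Integrable (fun x => g x * log (g x)) μ) :
    0 ≤ entropy μ g :=
  sub_nonneg.mpr <| convexOn_mul_log.map_integral_le continuous_mul_log.continuousOn isClosed_Ici
    (ae_of_all _ hg0) hg hgl

theorem ae_pos_imp_integral_pos {μ : Measure α} {g : α → ℝ} (hg0 : ∀ x, 0 ≤ g x)
    (hg : Integrable g μ) : ∀ᵐ x ∂μ, 0 < g x → 0 < ∫ x, g x ∂μ := by
  rcases (integral_nonneg (f := g) (μ := μ) hg0).eq_or_lt with h | h
  · filter_upwards [(integral_eq_zero_iff_of_nonneg hg0 hg).mp h.symm] with x hx hpos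
    exact absurd hx hpos.ne'
  · exact ae_of_all _ fun _ _ => h

variable {ρ : Measure α} {σ : Measure β} [IsProbabilityMeasure ρ] [IsProbabilityMeasure σ]
  {F : α × β → ℝ}

theorem integrable_mul_log_integral_prod_left (hF0 : ∀ p, 0 ≤ F p) (hF : Integrable F (ρ.prod σ))
    (hFl : Integrable (fun p => F p * log (F p)) (ρ.prod σ)) :
    Integrable (fun a => (∫ b, F (a, b) ∂σ) * log (∫ b, F (a, b) ∂σ)) ρ := by
  refine integrable_of_le_of_le
    (continuous_mul_log.comp_aestronglyMeasurable hF.integral_prod_left.aestronglyMeasurable)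
    (ae_of_all _ fun a => self_sub_one_le_mul_log (integral_nonneg fun b => hF0 _)) ?_
    (hF.integral_prod_left.sub (integrable_const 1)) hFl.integral_prod_left
  filter_upwards [hF.prod_right_ae, hFl.prod_right_ae] with a h1 h2
  exact sub_nonneg.mp (entropy_nonneg (fun b => hF0 _) h1 h2)

theorem integrable_entropy_prod_left (hF0 : ∀ p, 0 ≤ F p) (hF : Integrable F (ρ.prod σ))
    (hFl : Integrable (fun p => F p * log (F p)) (ρ.prod σ)) :
    Integrable (fun a => entropy σ (fun b => F (a, b))) ρ :=
  hFl.integral_prod_left.sub (integrable_mul_log_integral_prod_left hF0 hF hFl)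

theorem entropy_prod (hF0 : ∀ p, 0 ≤ F p) (hF : Integrable F (ρ.prod σ))
    (hFl : Integrable (fun p => F p * log (F p)) (ρ.prod σ)) :
    entropy (ρ.prod σ) F
      = ∫ a, entropy σ (fun b => F (a, b)) ∂ρ + entropy ρ (fun a => ∫ b, F (a, b) ∂σ) := by
  simp only [entropy]
  rw [integral_sub hFl.integral_prod_left (integrable_mul_log_integral_prod_left hF0 hF hFl),
    integral_prod _ hFl, integral_prod _ hF]
  ring

end General

section Discrete

variable {α β : Type*} [MeasurableSpace α] [Countable α] [MeasurableSingletonClass α]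
  [MeasurableSpace β] [Countable β] [MeasurableSingletonClass β]
  {ρ : Measure α} {σ : Measure β} {F : α × β → ℝ}

theorem ae_pos_imp_integral_prod_left_pos [SFinite ρ] [SFinite σ] (hF0 : ∀ p, 0 ≤ F p)
    (hF : Integrable F (ρ.prod σ)) :
    ∀ᵐ p ∂(ρ.prod σ), 0 < F p → 0 < ∫ b, F (p.1, b) ∂σ := by
  rw [Measure.ae_prod_iff_ae_ae .of_discrete]
  filter_upwards [hF.prod_right_ae] with a ha
  exact ae_pos_imp_integral_pos (fun b => hF0 _) ha

theorem ae_pos_imp_integral_prod_right_pos [SFinite ρ] [SFinite σ] (hF0 : ∀ p, 0 ≤ F p)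
    (hF : Integrable F (ρ.prod σ)) :
    ∀ᵐ p ∂(ρ.prod σ), 0 < F p → 0 < ∫ a, F (a, p.2) ∂ρ := by
  rw [Measure.ae_prod_iff_ae_ae .of_discrete, Measure.ae_ae_comm .of_discrete]
  filter_upwards [hF.prod_left_ae] with b hb
  exact ae_pos_imp_integral_pos (fun a => hF0 _) hb

theorem integrable_mul_comp_fst [SFinite ρ] [SFinite σ] (hF0 : ∀ p, 0 ≤ F p)
    (hF : Integrable F (ρ.prod σ)) {φ : α → ℝ}
    (hφ : Integrable (fun a => (∫ b, F (a, b) ∂σ) * φ a) ρ) :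
    Integrable (fun p => F p * φ p.1) (ρ.prod σ) := by
  rw [integrable_prod_iff (measurable_of_countable _).aestronglyMeasurable]
  refine ⟨?_, hφ.norm.congr ?_⟩
  · filter_upwards [hF.prod_right_ae] with a ha
    exact ha.mul_const _
  · refine ae_of_all _ fun a => ?_
    simp only [norm_mul, Real.norm_of_nonneg (hF0 _), integral_mul_const,
      Real.norm_of_nonneg (integral_nonneg fun b => hF0 (a, b))]

theorem integral_mul_comp_fst [SFinite ρ] [SFinite σ] (hF0 : ∀ p, 0 ≤ F p)
    (hF : Integrable F (ρ.prod σ)) {φ : α → ℝ}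
    (hφ : Integrable (fun a => (∫ b, F (a, b) ∂σ) * φ a) ρ) :
    ∫ p, F p * φ p.1 ∂(ρ.prod σ) = ∫ a, (∫ b, F (a, b) ∂σ) * φ a ∂ρ := by
  simp only [integral_prod _ (integrable_mul_comp_fst hF0 hF hφ), integral_mul_const]

theorem integral_mul_log_marginals_le [IsProbabilityMeasure ρ] [IsProbabilityMeasure σ]
    (hF0 : ∀ p, 0 ≤ F p) (hF : Integrable F (ρ.prod σ))
    (hFl : Integrable (fun p => F p * log (F p)) (ρ.prod σ)) :
    (∫ a, (∫ b, F (a, b) ∂σ) * log (∫ b, F (a, b) ∂σ) ∂ρ)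
        + ∫ b, (∫ a, F (a, b) ∂ρ) * log (∫ a, F (a, b) ∂ρ) ∂σ
      ≤ (∫ p, F p * log (F p) ∂(ρ.prod σ))
        + (∫ p, F p ∂(ρ.prod σ)) * log (∫ p, F p ∂(ρ.prod σ)) := by
  set h : α → ℝ := fun a => ∫ b, F (a, b) ∂σ
  set m : β → ℝ := fun b => ∫ a, F (a, b) ∂ρ
  set E : ℝ := ∫ p, F p ∂(ρ.prod σ)
  have hh : Integrable h ρ := hF.integral_prod_left
  have hm : Integrable m σ := hF.integral_prod_right
  have hhl : Integrable (fun a => h a * log (h a)) ρ :=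
    integrable_mul_log_integral_prod_left hF0 hF hFl
  have hml : Integrable (fun b => m b * log (m b)) σ :=
    integrable_mul_log_integral_prod_left (fun p => hF0 p.swap) hF.swap hFl.swap
  have hFlh : Integrable (fun p => F p * log (h p.1)) (ρ.prod σ) :=
    integrable_mul_comp_fst hF0 hF hhl
  have hFlm : Integrable (fun p => F p * log (m p.2)) (ρ.prod σ) :=
    (integrable_mul_comp_fst (fun p => hF0 p.swap) hF.swap hml).swap
  have hZ : Integrable (fun p => F p - h p.1 * m p.2 / E) (ρ.prod σ) :=
    hF.sub ((hh.mul_prod hm).div_const E)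
  have hX : Integrable (fun p => F p * log (h p.1) + F p * log (m p.2)) (ρ.prod σ) :=
    hFlh.add hFlm
  have hL : Integrable (fun p => F p * log (h p.1) + F p * log (m p.2)
      + (F p - h p.1 * m p.2 / E)) (ρ.prod σ) := hX.add hZ
  have hR : Integrable (fun p => F p * log (F p) + F p * log E) (ρ.prod σ) :=
    hFl.add (hF.mul_const _)
  have hgibbs : ∀ᵐ p ∂(ρ.prod σ), F p * log (h p.1) + F p * log (m p.2)
      + (F p - h p.1 * m p.2 / E) ≤ F p * log (F p) + F p * log E := by
    filter_upwards [ae_pos_imp_integral_prod_left_pos hF0 hF,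
      ae_pos_imp_integral_prod_right_pos hF0 hF, ae_pos_imp_integral_pos hF0 hF]
      with p hhp hmp hE
    exact mul_log_add_mul_log_add_sub_div_le (hF0 p) (integral_nonneg fun b => hF0 _)
      (integral_nonneg fun a => hF0 _) (integral_nonneg hF0) fun hp => ⟨hhp hp, hmp hp, hE hp⟩
  have hFlm_eq : ∫ p, F p * log (m p.2) ∂(ρ.prod σ) = ∫ b, m b * log (m b) ∂σ := by
    rw [← integral_prod_swap]
    exact integral_mul_comp_fst (fun p => hF0 p.swap) hF.swap hml
  have key := integral_mono_ae hL hR hgibbs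
  rw [integral_add hX hZ, integral_add hFlh hFlm, integral_sub hF ((hh.mul_prod hm).div_const E),
    integral_add hFl (hF.mul_const _), integral_mul_comp_fst hF0 hF hhl, hFlm_eq,
    integral_mul_const, integral_div, integral_prod_mul h m, ← integral_prod F hF,
    ← integral_prod_symm F hF, mul_self_div_self, sub_self] at key
  linarith

theorem entropy_integral_prod_left_le [IsProbabilityMeasure ρ] [IsProbabilityMeasure σ]
    (hF0 : ∀ p, 0 ≤ F p) (hF : Integrable F (ρ.prod σ))
    (hFl : Integrable (fun p => F p * log (F p)) (ρ.prod σ)) :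
    entropy ρ (fun a => ∫ b, F (a, b) ∂σ) ≤ ∫ b, entropy ρ (fun a => F (a, b)) ∂σ := by
  have hml : Integrable (fun b => (∫ a, F (a, b) ∂ρ) * log (∫ a, F (a, b) ∂ρ)) σ :=
    integrable_mul_log_integral_prod_left (fun p => hF0 p.swap) hF.swap hFl.swap
  have := integral_mul_log_marginals_le hF0 hF hFl
  simp only [entropy]
  rw [integral_sub hFl.integral_prod_right hml, ← integral_prod_symm _ hFl, ← integral_prod F hF]
  linarith

theorem entropy_prod_le [IsProbabilityMeasure ρ] [IsProbabilityMeasure σ]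
    (hF0 : ∀ p, 0 ≤ F p) (hF : Integrable F (ρ.prod σ))
    (hFl : Integrable (fun p => F p * log (F p)) (ρ.prod σ)) :
    entropy (ρ.prod σ) F ≤ ∫ a, entropy σ (fun b => F (a, b)) ∂ρ
      + ∫ b, entropy ρ (fun a => F (a, b)) ∂σ := by
  rw [entropy_prod hF0 hF hFl]
  exact add_le_add_right (entropy_integral_prod_left_le hF0 hF hFl) _

end Discrete

section Pi

variable {𝒳 : Type*} [MeasurableSpace 𝒳]

theorem measurePreserving_finCons {n : ℕ} (μ : Fin (n + 1) → Measure 𝒳)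
    [∀ i, SigmaFinite (μ i)] :
    MeasurePreserving (Fin.consEquiv fun _ => 𝒳)
      ((μ 0).prod (Measure.pi fun j => μ j.succ)) (Measure.pi μ) := by
  simpa [MeasurableEquiv.piFinSuccAbove_symm_apply] using
    (measurePreserving_piFinSuccAbove μ 0).symm

theorem integral_pi_succ_eq_integral_prod {n : ℕ} (μ : Fin (n + 1) → Measure 𝒳)
    [∀ i, SigmaFinite (μ i)] (g : (Fin (n + 1) → 𝒳) → ℝ) :
    ∫ x, g x ∂Measure.pi μ
      = ∫ p, g (Fin.cons p.1 p.2) ∂(μ 0).prod (Measure.pi fun j => μ j.succ) := by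
  rw [← (measurePreserving_piFinSuccAbove μ 0).symm.integral_comp']
  simp only [Fin.zero_succAbove, MeasurableEquiv.piFinSuccAbove_symm_apply,
    Fin.insertNthEquiv_zero]
  rfl

theorem MeasureTheory.Integrable.comp_finCons {n : ℕ} {μ : Fin (n + 1) → Measure 𝒳}
    [∀ i, SigmaFinite (μ i)] {g : (Fin (n + 1) → 𝒳) → ℝ} (hg : Integrable g (Measure.pi μ)) :
    Integrable (fun p : 𝒳 × (Fin n → 𝒳) => g (Fin.cons p.1 p.2))
      ((μ 0).prod (Measure.pi fun j => μ j.succ)) :=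
  (measurePreserving_finCons μ).integrable_comp_of_integrable hg

theorem integral_entropy_update_zero {n : ℕ} (μ : Fin (n + 1) → Measure 𝒳)
    [∀ i, IsProbabilityMeasure (μ i)] (f : (Fin (n + 1) → 𝒳) → ℝ) :
    ∫ x, entropy (μ 0) (fun y => f (Function.update x 0 y)) ∂Measure.pi μ
      = ∫ z, entropy (μ 0) (fun y => f (Fin.cons y z)) ∂Measure.pi fun j => μ j.succ := by
  rw [integral_pi_succ_eq_integral_prod]
  simp only [Fin.update_cons_zero]
  rw [integral_fun_snd (fun z => entropy (μ 0) fun y => f (Fin.cons y z)), probReal_univ,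
    one_smul]

theorem measurePreserving_update {n : ℕ} (μ : Fin (n + 1) → Measure 𝒳)
    [∀ i, IsProbabilityMeasure (μ i)] (i : Fin (n + 1)) :
    MeasurePreserving (fun q : (Fin (n + 1) → 𝒳) × 𝒳 => Function.update q.1 i q.2)
      ((Measure.pi μ).prod (μ i)) (Measure.pi μ) := by
  let e := MeasurableEquiv.piFinSuccAbove (fun _ : Fin (n + 1) => 𝒳) i
  have he : MeasurePreserving e (Measure.pi μ)
      ((μ i).prod (Measure.pi fun j => μ (i.succAbove j))) :=
    measurePreserving_piFinSuccAbove μ i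
  have hsplit : MeasurePreserving (fun q : (Fin (n + 1) → 𝒳) × 𝒳 => (q.2, (e q.1).2))
      ((Measure.pi μ).prod (μ i)) ((μ i).prod (Measure.pi fun j => μ (i.succAbove j))) :=
    Measure.measurePreserving_swap.comp ((measurePreserving_snd.comp he).prod (.id _))
  convert he.symm.comp hsplit using 1
  funext q
  exact (Fin.insertNth_removeNth i q.2 q.1).symm

theorem integrable_entropy_update {n : ℕ} (μ : Fin (n + 1) → Measure 𝒳)
    [∀ i, IsProbabilityMeasure (μ i)] {f : (Fin (n + 1) → 𝒳) → ℝ} (hf0 : ∀ x, 0 ≤ f x)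
    (hf : Integrable f (Measure.pi μ)) (hfl : Integrable (fun x => f x * log (f x)) (Measure.pi μ))
    (i : Fin (n + 1)) :
    Integrable (fun x => entropy (μ i) (fun y => f (Function.update x i y))) (Measure.pi μ) :=
  integrable_entropy_prod_left (F := fun q => f (Function.update q.1 i q.2)) (fun _ => hf0 _)
    ((measurePreserving_update μ i).integrable_comp_of_integrable hf)
    ((measurePreserving_update μ i).integrable_comp_of_integrable hfl)

theorem entropy_pi_le_sum [Countable 𝒳] [MeasurableSingletonClass 𝒳] {n : ℕ}
    (μ : Fin n → Measure 𝒳) [∀ i, IsProbabilityMeasure (μ i)] {f : (Fin n → 𝒳) → ℝ}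
    (hf0 : ∀ x, 0 ≤ f x) (hf : Integrable f (Measure.pi μ))
    (hfl : Integrable (fun x => f x * log (f x)) (Measure.pi μ)) :
    entropy (Measure.pi μ) f
      ≤ ∑ i, ∫ x, entropy (μ i) (fun y => f (Function.update x i y)) ∂Measure.pi μ := by
  induction n with
  | zero => simp [entropy, integral_unique]
  | succ n ih =>
    set ν := Measure.pi fun j : Fin n => μ j.succ with hν
    have hF : Integrable (fun p => f (Fin.cons p.1 p.2)) ((μ 0).prod ν) := hf.comp_finCons
    have hFl : Integrable (fun p => f (Fin.cons p.1 p.2) * log (f (Fin.cons p.1 p.2)))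
        ((μ 0).prod ν) := hfl.comp_finCons
    have hG : ∀ j : Fin n, Integrable (fun p => entropy (μ j.succ)
        (fun w => f (Fin.cons p.1 (Function.update p.2 j w)))) ((μ 0).prod ν) := fun j => by
      simpa only [← Fin.cons_update] using
        (integrable_entropy_update μ hf0 hf hfl j.succ).comp_finCons
    have hsucc : ∫ y, entropy ν (fun z => f (Fin.cons y z)) ∂μ 0
        ≤ ∑ j : Fin n, ∫ x, entropy (μ j.succ) (fun w => f (Function.update x j.succ w))
          ∂Measure.pi μ :=
      calc ∫ y, entropy ν (fun z => f (Fin.cons y z)) ∂μ 0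
          ≤ ∫ y, ∑ j : Fin n, ∫ z, entropy (μ j.succ)
              (fun w => f (Fin.cons y (Function.update z j w))) ∂ν ∂μ 0 := by
            refine integral_mono_ae (integrable_entropy_prod_left (fun _ => hf0 _) hF hFl)
              (integrable_finsetSum _ fun j _ => (hG j).integral_prod_left) ?_
            filter_upwards [hF.prod_right_ae, hFl.prod_right_ae] with y hy hyl
            exact ih (fun j => μ j.succ) (fun _ => hf0 _) hy hyl
        _ = _ := by
            rw [integral_finsetSum _ fun j _ => (hG j).integral_prod_left]
            refine Finset.sum_congr rfl fun j _ => ?_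
            rw [integral_pi_succ_eq_integral_prod, ← hν, ← integral_prod _ (hG j)]
            simp only [← Fin.cons_update]
    calc entropy (Measure.pi μ) f = entropy ((μ 0).prod ν) (fun p => f (Fin.cons p.1 p.2)) := by
          simp only [entropy, integral_pi_succ_eq_integral_prod, ← hν]
      _ ≤ ∫ y, entropy ν (fun z => f (Fin.cons y z)) ∂μ 0
          + ∫ z, entropy (μ 0) (fun y => f (Fin.cons y z)) ∂ν :=
          entropy_prod_le (fun _ => hf0 _) hF hFl
      _ ≤ _ := by
        rw [Fin.sum_univ_succ, integral_entropy_update_zero, ← hν]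
        linarith

end Pi

/-- Tensorization (sub-additivity) of entropy for independent random variables
(Theorem 4.10 of Boucheron–Lugosi–Massart): with `Φ(x) = x ln x`,
`E[Φ(f)] - Φ(E[f]) ≤ ∑ᵢ E[ Eᵢ[Φ(f)] - Φ(Eᵢ[f]) ]`. -/
theorem entropy_tensorization
    (𝒳 : Type*) [MeasurableSpace 𝒳] [Countable 𝒳] [MeasurableSingletonClass 𝒳]
    (n : ℕ) (μ : Fin n → Measure 𝒳) [∀ i, IsProbabilityMeasure (μ i)]
    (f : (Fin n → 𝒳) → ℝ) (hf0 : ∀ x, 0 ≤ f x)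
    (Φ : ℝ → ℝ) (hΦ : ∀ x, Φ x = x * Real.log x)
    (hint : Integrable f (Measure.pi μ))
    (hintΦ : Integrable (fun x => Φ (f x)) (Measure.pi μ)) :
    (∫ x, Φ (f x) ∂Measure.pi μ) - Φ (∫ x, f x ∂Measure.pi μ)
      ≤ ∑ i : Fin n, ∫ x,
          ((∫ y, Φ (f (Function.update x i y)) ∂μ i)
            - Φ (∫ y, f (Function.update x i y) ∂μ i)) ∂Measure.pi μ := by
  obtain rfl : Φ = fun x => x * log x := funext hΦ
  exact entropy_pi_le_sum μ hf0 hint hintΦ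
end

section
/- Consider the forward hypercube CTMC on $\{0,1\}^n$ with single-bit-flip rates, started from an arbitrary distribution $q_0$. For any $t > 0$, any state $y$, and any coordinate $i$, the marginal $q_t$ satisfies the ratio bound $\frac{q_t(y \oplus e_i)}{q_t(y)} \le \frac{1 + e^{-2t}}{1 - e^{-2t}} \le 1 + t^{-1}$. -/
open Real Classical NormedSpace

/-!
The generator is `R = ∑ i, (σ - 1)` with the `i`-th summand acting in tensor slot `i`, where `σ`,
the adjacency matrix of the complete graph on `Bool`, swaps the two states. The summands commute,
so `exp (t • R)` is the `n`-fold tensor power of `exp (t • (σ - 1))`, which has entries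
`a = (1 + e^{-2t}) / 2` on and `b = (1 - e^{-2t}) / 2` off the diagonal. Flipping bit `i` of the
row changes only the `i`-th factor of each entry, so it multiplies every entry, hence `q_t`, by at
most `a / b = coth t ≤ 1 + 1 / t`.
-/

open scoped Nat in
theorem NormedSpace.exp_smul_of_isIdempotentElem {A : Type*} [Ring A] [Algebra ℝ A]
    [TopologicalSpace A] [IsTopologicalRing A] [ContinuousSMul ℝ A] [T2Space A]
    {E : A} (hE : IsIdempotentElem E) (s : ℝ) :
    exp (s • E) = 1 + (Real.exp s - 1) • E := by
  have hexp : HasSum (fun k : ℕ => ((k ! : ℝ)⁻¹ * s ^ k) • E) (Real.exp s • E) := by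
    rw [Real.exp_eq_exp_ℝ]
    simpa only [smul_eq_mul] using (exp_series_hasSum_exp' (𝕂 := ℝ) s).smul_const E
  rw [exp_eq_tsum ℝ]
  convert (hexp.add (hasSum_ite_eq 0 (1 - E))).tsum_eq using 1
  · refine tsum_congr fun k => ?_
    rcases k with _ | k
    · simp
    · simp [smul_pow, hE.pow_succ_eq, smul_smul, mul_comm]
  · rw [sub_smul, one_smul]
    abel

theorem Real.one_add_exp_neg_two_mul_div_one_sub_le {t : ℝ} (ht : 0 < t) :
    (1 + Real.exp (-2 * t)) / (1 - Real.exp (-2 * t)) ≤ 1 + t⁻¹ := by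
  have hu : Real.exp (-2 * t) < 1 := Real.exp_lt_one_iff.2 (by linarith)
  have hkey : Real.exp (-2 * t) * (2 * t + 1) ≤ 1 := by
    have hinv : Real.exp (-2 * t) * Real.exp (2 * t) = 1 := by rw [← Real.exp_add]; simp
    nlinarith [Real.add_one_le_exp (2 * t), Real.exp_pos (-2 * t)]
  have hdiff : (1 + t⁻¹) * (1 - Real.exp (-2 * t)) - (1 + Real.exp (-2 * t)) =
      t⁻¹ * (1 - Real.exp (-2 * t) * (2 * t + 1)) := by
    field_simp
    ring
  rw [div_le_iff₀ (by linarith), ← sub_nonneg, hdiff]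
  exact mul_nonneg (inv_nonneg.2 ht.le) (by linarith)

namespace Matrix

variable {ι α R : Type*} [Fintype ι] [CommSemiring R]

/-- The tensor product of the matrices `k j`, indexed by `ι → α`. -/
def piKronecker (k : ι → Matrix α α R) : Matrix (ι → α) (ι → α) R :=
  of fun z w => ∏ j, k j (z j) (w j)

@[simp]
theorem piKronecker_apply (k : ι → Matrix α α R) (z w : ι → α) :
    piKronecker k z w = ∏ j, k j (z j) (w j) := rfl

theorem piKronecker_mul [DecidableEq ι] [Fintype α] (k l : ι → Matrix α α R) :
    piKronecker (k * l) = piKronecker k * piKronecker l := by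
  ext z w
  simp only [piKronecker_apply, Pi.mul_apply, mul_apply, Fintype.prod_sum,
    Finset.prod_mul_distrib]

theorem piKronecker_one [DecidableEq α] : piKronecker (1 : ι → Matrix α α R) = 1 := by
  ext z w
  simp only [piKronecker_apply, Pi.one_apply, one_apply, Finset.prod_boole, Finset.mem_univ,
    true_implies, funext_iff]

def piKroneckerHom [DecidableEq ι] [Fintype α] [DecidableEq α] :
    (ι → Matrix α α R) →* Matrix (ι → α) (ι → α) R where
  toFun := piKronecker
  map_one' := piKronecker_one
  map_mul' := piKronecker_mul

theorem piKronecker_mulSingle_apply [DecidableEq ι] [DecidableEq α] (i : ι) (M : Matrix α α R)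
    (z w : ι → α) :
    piKronecker (Pi.mulSingle i M) z w =
      M (z i) (w i) * ∏ j ∈ {i}ᶜ, (1 : Matrix α α R) (z j) (w j) := by
  rw [piKronecker_apply, Fintype.prod_eq_mul_prod_compl i, Pi.mulSingle_eq_same]
  congr 1
  refine Finset.prod_congr rfl fun j hj => ?_
  rw [Pi.mulSingle_eq_of_ne (by simpa using hj)]

def piKroneckerSingle [DecidableEq ι] [Fintype α] [DecidableEq α] (i : ι) :
    Matrix α α R →ₐ[R] Matrix (ι → α) (ι → α) R :=
  AlgHom.ofLinearMap
    { toFun := fun M => piKronecker (Pi.mulSingle i M)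
      map_add' := fun M N => by
        ext z w
        simp only [piKronecker_mulSingle_apply, add_apply, add_mul]
      map_smul' := fun c M => by
        ext z w
        simp only [piKronecker_mulSingle_apply, smul_apply, smul_eq_mul, mul_assoc,
          RingHom.id_apply] }
    (by simp only [LinearMap.coe_mk, AddHom.coe_mk, Pi.mulSingle_one, piKronecker_one])
    (fun M N => by
      show piKronecker _ = piKronecker _ * piKronecker _
      rw [Pi.mulSingle_mul, piKronecker_mul])

theorem piKroneckerSingle_apply [DecidableEq ι] [Fintype α] [DecidableEq α] (i : ι)
    (M : Matrix α α R) :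
    piKroneckerSingle i M = piKronecker (Pi.mulSingle i M) := rfl

theorem piKroneckerSingle_adjMatrix_top_apply [DecidableEq ι] [Fintype α] [DecidableEq α]
    (i : ι) (z w : ι → α) :
    piKroneckerSingle i ((⊤ : SimpleGraph α).adjMatrix R) z w =
      if ({j | z j ≠ w j} : Finset ι) = {i} then 1 else 0 := by
  rw [piKroneckerSingle_apply, piKronecker_mulSingle_apply]
  simp only [SimpleGraph.adjMatrix_apply, SimpleGraph.top_adj, one_apply, Finset.prod_boole,
    Finset.eq_singleton_iff_unique_mem, Finset.mem_filter, Finset.mem_univ, true_and,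
    Finset.mem_compl, Finset.mem_singleton, ite_zero_mul_ite_zero, mul_one]
  exact if_congr (and_congr_right fun _ => forall_congr' fun _ => not_imp_comm) rfl rfl

theorem sum_piKroneckerSingle_adjMatrix_top_apply [DecidableEq ι] [Fintype α] [DecidableEq α]
    (z w : ι → α) :
    ∑ i, piKroneckerSingle i ((⊤ : SimpleGraph α).adjMatrix R) z w =
      if hammingDist z w = 1 then 1 else 0 := by
  have hdist : hammingDist z w = 1 ↔ ∃ i, ({j | z j ≠ w j} : Finset ι) = {i} :=
    Finset.card_eq_one
  simp only [piKroneckerSingle_adjMatrix_top_apply]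
  by_cases h : ∃ i, ({j | z j ≠ w j} : Finset ι) = {i}
  · obtain ⟨i, hi⟩ := h
    simp only [hi, Finset.singleton_inj, Finset.sum_ite_eq, Finset.mem_univ, if_true,
      if_pos (hdist.2 ⟨i, hi⟩)]
  · rw [if_neg (hdist.not.2 h)]
    exact Finset.sum_eq_zero fun i _ => if_neg fun hi => h ⟨i, hi⟩

theorem sum_piKroneckerSingle_adjMatrix_top_sub_one {R : Type*} [CommRing R] [DecidableEq ι]
    [Fintype α] [DecidableEq α] :
    ∑ i : ι, piKroneckerSingle i ((⊤ : SimpleGraph α).adjMatrix R - 1) =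
      of fun z w =>
        if hammingDist z w = 1 then 1 else if z = w then -(Fintype.card ι : R) else 0 := by
  ext z w
  simp only [map_sub, map_one, Finset.sum_sub_distrib, sub_apply, sum_apply,
    sum_piKroneckerSingle_adjMatrix_top_apply, Finset.sum_const, Finset.card_univ,
    one_apply, nsmul_eq_mul, of_apply]
  split_ifs <;> simp_all

theorem exp_piKroneckerSingle [DecidableEq ι] [Fintype α] [DecidableEq α] (i : ι)
    (X : Matrix α α ℝ) :
    exp (piKroneckerSingle i X) = piKroneckerSingle i (exp X) := by
  have hcont : Continuous (piKroneckerSingle (R := ℝ) (ι := ι) (α := α) i) :=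
    (piKroneckerSingle (R := ℝ) (ι := ι) i).toLinearMap.continuous_of_finiteDimensional
  open scoped Norms.Operator in exact (map_exp (piKroneckerSingle i) hcont X).symm

theorem exp_sum_piKroneckerSingle [DecidableEq ι] [Fintype α] [DecidableEq α]
    (X : Matrix α α ℝ) :
    exp (∑ i, piKroneckerSingle i X) = piKronecker fun _ : ι => exp X := by
  have hcomm (Y : Matrix α α ℝ) (i j : ι) :
      Commute (piKroneckerSingle i Y) (piKroneckerSingle j Y) :=
    (Pi.mulSingle_apply_commute (fun _ => Y) i j).map piKroneckerHom
  calc exp (∑ i, piKroneckerSingle i X)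
      = Finset.univ.noncommProd (fun i => exp (piKroneckerSingle i X))
          fun i _ j _ _ => (hcomm X i j).exp :=
        exp_sum_of_commute _ _ fun i _ j _ _ => hcomm X i j
    _ = Finset.univ.noncommProd (fun i => piKroneckerHom (Pi.mulSingle i (exp X)))
          fun i _ j _ _ => hcomm (exp X) i j :=
        Finset.noncommProd_congr rfl (fun i _ => exp_piKroneckerSingle i X) _
    _ = piKroneckerHom (Finset.univ.noncommProd (fun i => Pi.mulSingle i (exp X))
          fun i _ j _ _ => Pi.mulSingle_apply_commute (fun _ => exp X) i j) :=
        (Finset.map_noncommProd _ _ _ _).symm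
    _ = piKronecker fun _ : ι => exp X :=
        congrArg piKroneckerHom (Finset.noncommProd_mulSingle _)

theorem exp_smul_adjMatrix_top_sub_one_bool (t : ℝ) :
    NormedSpace.exp (t • ((⊤ : SimpleGraph Bool).adjMatrix ℝ - 1)) =
      of fun x y =>
        if x = y then (1 + Real.exp (-2 * t)) / 2 else (1 - Real.exp (-2 * t)) / 2 := by
  set E : Matrix Bool Bool ℝ := (2⁻¹ : ℝ) • (1 - (⊤ : SimpleGraph Bool).adjMatrix ℝ)
  have hE : IsIdempotentElem E := by
    ext x y
    cases x <;> cases y <;> simp [E, mul_apply] <;> norm_num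
  have htE : t • ((⊤ : SimpleGraph Bool).adjMatrix ℝ - 1) = (-2 * t) • E := by
    simp only [E]
    module
  rw [htE, NormedSpace.exp_smul_of_isIdempotentElem hE]
  ext x y
  cases x <;> cases y <;> simp [E] <;> ring

theorem piKronecker_mulVec_nonneg [DecidableEq ι] [Fintype α] {k : ι → Matrix α α ℝ}
    (hk : ∀ j x y, 0 ≤ k j x y) {v : (ι → α) → ℝ} (hv : 0 ≤ v) :
    0 ≤ piKronecker k *ᵥ v := fun _ =>
  Finset.sum_nonneg fun w _ => mul_nonneg (Finset.prod_nonneg fun _ _ => hk _ _ _) (hv w)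

theorem piKronecker_update_apply_le [DecidableEq ι] {k : Matrix α α ℝ} {a b : ℝ} (hb : 0 < b)
    (hk : ∀ x y, k x y ∈ Set.Icc b a) (z : ι → α) (i : ι) (x : α) (w : ι → α) :
    piKronecker (fun _ => k) (Function.update z i x) w ≤ a / b * piKronecker (fun _ => k) z w := by
  have hrest : ∏ j ∈ {i}ᶜ, k (Function.update z i x j) (w j) = ∏ j ∈ {i}ᶜ, k (z j) (w j) :=
    Finset.prod_congr rfl fun j hj => by rw [Function.update_of_ne (by simpa using hj)]
  rw [piKronecker_apply, piKronecker_apply, Fintype.prod_eq_mul_prod_compl i,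
    Fintype.prod_eq_mul_prod_compl i, Function.update_self, hrest, ← mul_assoc]
  refine mul_le_mul_of_nonneg_right ?_ (Finset.prod_nonneg fun j _ => hb.le.trans (hk _ _).1)
  have hab : 0 ≤ a / b := div_nonneg (hb.le.trans ((hk x x).1.trans (hk x x).2)) hb.le
  calc k x (w i) ≤ a := (hk _ _).2
    _ = a / b * b := (div_mul_cancel₀ a hb.ne').symm
    _ ≤ a / b * k (z i) (w i) := mul_le_mul_of_nonneg_left (hk _ _).1 hab

theorem piKronecker_mulVec_update_le [DecidableEq ι] [Fintype α] {k : Matrix α α ℝ} {a b : ℝ}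
    (hb : 0 < b) (hk : ∀ x y, k x y ∈ Set.Icc b a) {v : (ι → α) → ℝ} (hv : 0 ≤ v)
    (z : ι → α) (i : ι) (x : α) :
    (piKronecker (fun _ => k) *ᵥ v) (Function.update z i x) ≤
      a / b * (piKronecker (fun _ => k) *ᵥ v) z := by
  simp only [mulVec, dotProduct, Finset.mul_sum, ← mul_assoc]
  exact Finset.sum_le_sum fun w _ =>
    mul_le_mul_of_nonneg_right (piKronecker_update_apply_le hb hk z i x w) (hv w)

end Matrix

open Matrix

theorem hypercube_marginal_ratio_bound_general
    (n : ℕ) (t : ℝ) (ht : 0 < t)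
    (R : Matrix (Fin n → Bool) (Fin n → Bool) ℝ)
    (hR : ∀ y y' : Fin n → Bool,
      R y y' = if hammingDist y y' = 1 then (1 : ℝ)
               else if y = y' then -(n : ℝ) else 0)
    (q₀ : (Fin n → Bool) → ℝ)
    (hq₀ : ∀ y, 0 ≤ q₀ y)
    (q : ℝ → (Fin n → Bool) → ℝ)
    (hq : ∀ s, q s = (NormedSpace.exp (s • R)).mulVec q₀)
    (y : Fin n → Bool) (i : Fin n) :
    q t (Function.update y i (!(y i))) / q t y
        ≤ (1 + Real.exp (-2 * t)) / (1 - Real.exp (-2 * t)) ∧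
      (1 + Real.exp (-2 * t)) / (1 - Real.exp (-2 * t)) ≤ 1 + t⁻¹ := by
  have hR' : R = ∑ j, piKroneckerSingle j ((⊤ : SimpleGraph Bool).adjMatrix ℝ - 1) := by
    ext z w
    rw [hR, sum_piKroneckerSingle_adjMatrix_top_sub_one, of_apply, Fintype.card_fin]
  set u := Real.exp (-2 * t)
  set K : Matrix Bool Bool ℝ := of fun x y => if x = y then (1 + u) / 2 else (1 - u) / 2 with hK
  have hexp : exp (t • R) = piKronecker fun _ => K := by
    rw [hR', Finset.smul_sum]
    simp only [← map_smul]
    rw [exp_sum_piKroneckerSingle, exp_smul_adjMatrix_top_sub_one_bool]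
  have hu₀ : 0 < u := Real.exp_pos _
  have hu₁ : u < 1 := Real.exp_lt_one_iff.2 (by linarith)
  have hKb (x y : Bool) : K x y ∈ Set.Icc ((1 - u) / 2) ((1 + u) / 2) := by
    simp only [hK, of_apply]
    split_ifs <;> constructor <;> linarith
  refine ⟨div_le_of_le_mul₀ ?_ (div_nonneg (by linarith) (by linarith)) ?_,
    Real.one_add_exp_neg_two_mul_div_one_sub_le ht⟩
  · rw [hq, hexp]
    exact piKronecker_mulVec_nonneg (fun _ x y => (hKb x y).1.trans' (by linarith)) hq₀ y
  · have hratio := piKronecker_mulVec_update_le (by linarith) hKb hq₀ y i (!y i)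
    rwa [div_div_div_cancel_right₀ (two_ne_zero' ℝ), ← hexp, ← hq] at hratio

/-- Ratio bound along the forward hypercube CTMC: for `t > 0`,
`q_t(y ⊕ eᵢ) / q_t(y) ≤ (1 + e^{-2t})/(1 - e^{-2t}) ≤ 1 + t⁻¹`. -/
theorem hypercube_marginal_ratio_bound
    (n : ℕ) (t : ℝ) (ht : 0 < t)
    (R : Matrix (Fin n → Bool) (Fin n → Bool) ℝ)
    (hR : ∀ y y' : Fin n → Bool,
      R y y' = if hammingDist y y' = 1 then (1 : ℝ)
               else if y = y' then -(n : ℝ) else 0)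
    (q₀ : (Fin n → Bool) → ℝ)
    (hq₀ : ∀ y, 0 ≤ q₀ y) (hsum : ∑ y, q₀ y = 1)
    (q : ℝ → (Fin n → Bool) → ℝ)
    (hq : ∀ s, q s = (NormedSpace.exp (s • R)).mulVec q₀)
    (y : Fin n → Bool) (i : Fin n) :
    q t (Function.update y i (!(y i))) / q t y
        ≤ (1 + Real.exp (-2 * t)) / (1 - Real.exp (-2 * t)) ∧
      (1 + Real.exp (-2 * t)) / (1 - Real.exp (-2 * t)) ≤ 1 + t⁻¹ :=
  hypercube_marginal_ratio_bound_general n t ht R hR q₀ hq₀ q hq y i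
end

section
/- Consider the hypercube CTMC on $\{0,1\}^n$ run forward for time $T$, and define the reverse-time rate at time $t$ by $R^\gets_t(y', y) = R^\to(y, y') \cdot q^\to_{T-t}(y')/q^\to_{T-t}(y)$ where $R^\to$ is the flip-rate-1 generator. Then for every state $y$ and every $t \in [0, T)$, the total outgoing rate satisfies $\sum_{y' \ne y} R^\gets_t(y', y) \le n\,(1 + (T-t)^{-1}) \le 2n \max\{1, (T-t)^{-1}\}$. -/
/-!
Flipping coordinate `i` is an involution `σ` of the cube whose permutation matrix `P` commutes
with the generator `R`, while `R - P` still has nonnegative off-diagonal entries; so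
`E = exp (s (R - P))` is entrywise nonnegative and `σ`-equivariant. As `P² = 1`,
`exp (s R) = E (cosh s + sinh s P)`, and flipping a coordinate of the source state therefore
multiplies an entry of `exp (s R)` by at most `coth s ≤ 1 + 1/s`. The same holds for
`q_s = exp (s R) q₀` since `q₀ ≥ 0`, and each of the at most `n` neighbours `y'` of `y`
contributes `q_s y' / q_s y ≤ 1 + 1/s` to the reverse rate.
-/

theorem NormedSpace.exp_smul_of_mul_self_eq_one {𝔸 : Type*} [Ring 𝔸] [Algebra ℝ 𝔸]
    [TopologicalSpace 𝔸] [IsTopologicalRing 𝔸] [ContinuousSMul ℝ 𝔸] [T2Space 𝔸]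
    {P : 𝔸} (hP : P * P = 1) (s : ℝ) :
    NormedSpace.exp (s • P) = Real.cosh s • 1 + Real.sinh s • P := by
  have hPeven (k : ℕ) : P ^ (2 * k) = 1 := by rw [pow_mul, sq, hP, one_pow]
  rw [exp_eq_tsum ℝ]
  refine HasSum.tsum_eq (HasSum.even_add_odd ?_ ?_)
  · convert (Real.hasSum_cosh s).smul_const (1 : 𝔸) using 2 with k
    rw [smul_pow, hPeven, smul_smul, div_eq_inv_mul]
  · convert (Real.hasSum_sinh s).smul_const P using 2 with k
    rw [smul_pow, pow_succ P, hPeven, one_mul, smul_smul, div_eq_inv_mul]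

theorem Real.cosh_le_one_add_inv_mul_sinh {s : ℝ} (hs : 0 < s) :
    Real.cosh s ≤ (1 + s⁻¹) * Real.sinh s := by
  have h1 : (1 + 2 * s) * Real.exp (-s) ≤ Real.exp s :=
    calc (1 + 2 * s) * Real.exp (-s) ≤ Real.exp (2 * s) * Real.exp (-s) := by
          gcongr
          linarith [Real.add_one_le_exp (2 * s)]
      _ = Real.exp s := by rw [← Real.exp_add]; ring_nf
  have hsinh : s * Real.exp (-s) ≤ Real.sinh s := by
    rw [Real.sinh_eq]
    linarith
  rw [add_mul, one_mul, ← sub_le_iff_le_add', Real.cosh_sub_sinh, inv_mul_eq_div,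
    le_div_iff₀ hs]
  linarith

namespace Matrix

theorem mulVec_apply_le_of_apply_le {ι κ α : Type*} [Fintype κ] [CommSemiring α]
    [PartialOrder α] [IsOrderedRing α] {M : Matrix ι κ α} {v : κ → α}
    (hv : ∀ k, 0 ≤ v k) {i i' : ι} {c : α} (h : ∀ k, M i' k ≤ c * M i k) :
    (M *ᵥ v) i' ≤ c * (M *ᵥ v) i := by
  simp only [mulVec, dotProduct, Finset.mul_sum, ← mul_assoc]
  exact Finset.sum_le_sum fun k _ => mul_le_mul_of_nonneg_right (h k) (hv k)

theorem mulVec_nonneg {ι κ α : Type*} [Fintype κ] [Semiring α] [PartialOrder α]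
    [IsOrderedRing α] {M : Matrix ι κ α} {v : κ → α}
    (hM : ∀ i k, 0 ≤ M i k) (hv : ∀ k, 0 ≤ v k) (i : ι) : 0 ≤ (M *ᵥ v) i :=
  Finset.sum_nonneg fun k _ => mul_nonneg (hM i k) (hv k)

section

variable {ι : Type*} [Fintype ι] [DecidableEq ι]

open scoped Matrix.Norms.Operator in
theorem hasSum_exp_apply (A : Matrix ι ι ℝ) (i j : ι) :
    HasSum (fun k : ℕ => (k.factorial : ℝ)⁻¹ * (A ^ k) i j) (NormedSpace.exp A i j) :=
  Pi.hasSum.mp (Pi.hasSum.mp (NormedSpace.exp_series_hasSum_exp' (𝕂 := ℝ) A) i) j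

theorem exp_apply_nonneg_of_nonneg {A : Matrix ι ι ℝ} (hA : ∀ i j, 0 ≤ A i j) (i j : ι) :
    0 ≤ NormedSpace.exp A i j :=
  (hasSum_exp_apply A i j).nonneg fun k => mul_nonneg (by positivity) (pow_apply_nonneg hA k i j)

theorem exp_smul_one (c : ℝ) :
    NormedSpace.exp (c • 1 : Matrix ι ι ℝ) = Real.exp c • 1 := by
  rw [smul_one_eq_diagonal, exp_diagonal, smul_one_eq_diagonal]
  congr 1
  ext
  rw [Pi.coe_exp, Real.exp_eq_exp_ℝ]

theorem exp_apply_nonneg_of_offDiag_nonneg {A : Matrix ι ι ℝ} (hA : ∀ i j, i ≠ j → 0 ≤ A i j)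
    (i j : ι) : 0 ≤ NormedSpace.exp A i j := by
  set c := ∑ k, |A k k|
  have hshift : ∀ i j, 0 ≤ (A + c • 1) i j := by
    intro i j
    rcases eq_or_ne i j with rfl | hij
    · have : |A i i| ≤ c :=
        Finset.single_le_sum (f := fun k => |A k k|) (fun k _ => abs_nonneg _) (Finset.mem_univ i)
      simp only [add_apply, smul_apply, one_apply_eq, smul_eq_mul, mul_one]
      linarith [neg_abs_le (A i i)]
    · simp only [add_apply, smul_apply, one_apply_ne hij, smul_zero, add_zero]
      exact hA i j hij
  have hexp : NormedSpace.exp A = Real.exp (-c) • NormedSpace.exp (A + c • 1) :=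
    calc NormedSpace.exp A = NormedSpace.exp ((A + c • 1) + (-c) • 1) := by
          rw [neg_smul, add_neg_cancel_right]
      _ = Real.exp (-c) • NormedSpace.exp (A + c • 1) := by
          rw [exp_add_of_commute _ _ ((Commute.one_right _).smul_right _), exp_smul_one,
            mul_smul_comm, mul_one]
  rw [hexp, smul_apply, smul_eq_mul]
  exact mul_nonneg (Real.exp_pos _).le (exp_apply_nonneg_of_nonneg hshift i j)

theorem permMatrix_mul_apply {α : Type*} [NonAssocSemiring α] (σ : Equiv.Perm ι)
    (M : Matrix ι ι α) (i j : ι) : (σ.permMatrix α * M) i j = M (σ i) j := by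
  rw [PEquiv.toMatrix_toPEquiv_mul, submatrix_apply, id]

theorem mul_permMatrix_apply {α : Type*} [NonAssocSemiring α] (σ : Equiv.Perm ι)
    (M : Matrix ι ι α) (i j : ι) : (M * σ.permMatrix α) i j = M i (σ.symm j) := by
  rw [PEquiv.mul_toMatrix_toPEquiv, submatrix_apply, id]

theorem exp_smul_apply_eq_of_involutive {A : Matrix ι ι ℝ} {σ : Equiv.Perm ι}
    (hσ : Function.Involutive σ) (hAσ : Commute A (σ.permMatrix ℝ)) (s : ℝ) (i j : ι) :
    NormedSpace.exp (s • A) i j =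
      Real.cosh s * NormedSpace.exp (s • (A - σ.permMatrix ℝ)) i j +
      Real.sinh s * NormedSpace.exp (s • (A - σ.permMatrix ℝ)) i (σ j) := by
  set P := σ.permMatrix ℝ
  have hPP : P * P = 1 := by
    rw [← permMatrix_mul, show σ * σ = 1 from Equiv.ext hσ, permMatrix_one]
  have hsplit : s • A = s • (A - P) + s • P := by rw [← smul_add, sub_add_cancel]
  rw [hsplit, exp_add_of_commute _ _ (((hAσ.sub_left (Commute.refl P)).smul_left s).smul_right s),
    NormedSpace.exp_smul_of_mul_self_eq_one hPP, mul_add, mul_smul_comm, mul_smul_comm, mul_one,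
    add_apply, smul_apply, smul_apply, mul_permMatrix_apply,
    Function.Involutive.symm_eq_self_of_involutive σ hσ, smul_eq_mul, smul_eq_mul]

theorem exp_smul_apply_perm_le {A : Matrix ι ι ℝ} {σ : Equiv.Perm ι}
    (hσ : Function.Involutive σ) (hAσ : Commute A (σ.permMatrix ℝ))
    (hle : ∀ i j, i ≠ j → σ.permMatrix ℝ i j ≤ A i j) {s : ℝ} (hs : 0 < s) (i j : ι) :
    NormedSpace.exp (s • A) (σ i) j ≤ (1 + s⁻¹) * NormedSpace.exp (s • A) i j := by
  rw [exp_smul_apply_eq_of_involutive hσ hAσ, exp_smul_apply_eq_of_involutive hσ hAσ]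
  set P := σ.permMatrix ℝ
  set E := NormedSpace.exp (s • (A - P))
  have hE_nonneg : ∀ i j, 0 ≤ E i j := exp_apply_nonneg_of_offDiag_nonneg fun i j hij => by
    simpa [smul_apply, sub_apply] using mul_nonneg hs.le (sub_nonneg.mpr (hle i j hij))
  have hE_σ (i j : ι) : E (σ i) j = E i (σ j) := by
    have hEP : Commute E P := ((hAσ.sub_left (Commute.refl P)).smul_left s).exp_left
    rw [← permMatrix_mul_apply σ E, hEP.symm.eq, mul_permMatrix_apply,
      Function.Involutive.symm_eq_self_of_involutive σ hσ]
  rw [hE_σ, hE_σ, hσ]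
  have hcosh := Real.cosh_le_one_add_inv_mul_sinh hs
  have hsinh : Real.sinh s ≤ (1 + s⁻¹) * Real.cosh s := by
    nlinarith [Real.sinh_lt_cosh s, Real.cosh_pos s, inv_pos.mpr hs]
  linarith [mul_le_mul_of_nonneg_right hcosh (hE_nonneg i (σ j)),
    mul_le_mul_of_nonneg_right hsinh (hE_nonneg i j)]

end

end Matrix

section

variable {ι : Type*} [DecidableEq ι]

def flipCoord (i : ι) (y : ι → Bool) : ι → Bool := Function.update y i (!y i)

theorem flipCoord_apply_self (i : ι) (y : ι → Bool) : flipCoord i y i = !y i := by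
  simp [flipCoord]

theorem flipCoord_apply_of_ne {i j : ι} (h : j ≠ i) (y : ι → Bool) : flipCoord i y j = y j :=
  Function.update_of_ne h _ _

theorem flipCoord_involutive (i : ι) : Function.Involutive (flipCoord i) := fun y => by
  funext j
  rcases eq_or_ne j i with rfl | h
  · simp [flipCoord_apply_self]
  · rw [flipCoord_apply_of_ne h, flipCoord_apply_of_ne h]

def flipPerm (i : ι) : Equiv.Perm (ι → Bool) := (flipCoord_involutive i).toPerm

theorem flipPerm_apply (i : ι) (y : ι → Bool) : flipPerm i y = flipCoord i y := rfl

theorem flipPerm_symm (i : ι) : (flipPerm i).symm = flipPerm i := rfl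

end

section Hypercube

variable {ι : Type*} [Fintype ι]

variable (ι) in
def hypercubeGenerator : Matrix (ι → Bool) (ι → Bool) ℝ :=
  Matrix.of fun y z =>
    if hammingDist y z = 1 then 1 else if y = z then -(Fintype.card ι : ℝ) else 0

theorem hypercubeGenerator_apply_nonneg_of_ne {y z : ι → Bool} (hyz : y ≠ z) :
    0 ≤ hypercubeGenerator ι y z := by
  simp only [hypercubeGenerator, Matrix.of_apply, if_neg hyz]
  split_ifs <;> norm_num

variable [DecidableEq ι]

theorem exp_smul_hypercubeGenerator_apply_nonneg {s : ℝ} (hs : 0 ≤ s) (y z : ι → Bool) :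
    0 ≤ NormedSpace.exp (s • hypercubeGenerator ι) y z :=
  Matrix.exp_apply_nonneg_of_offDiag_nonneg
    (fun _ _ hyz => mul_nonneg hs (hypercubeGenerator_apply_nonneg_of_ne hyz)) y z

theorem hammingDist_flipCoord_flipCoord (i : ι) (y z : ι → Bool) :
    hammingDist (flipCoord i y) (flipCoord i z) = hammingDist y z := by
  unfold hammingDist
  congr 1
  refine Finset.filter_congr fun j _ => ?_
  rcases eq_or_ne j i with rfl | h
  · simp [flipCoord_apply_self]
  · rw [flipCoord_apply_of_ne h, flipCoord_apply_of_ne h]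

theorem hammingDist_flipCoord_self (i : ι) (y : ι → Bool) :
    hammingDist y (flipCoord i y) = 1 := by
  rw [hammingDist, Finset.card_eq_one]
  refine ⟨i, Finset.ext fun j => ?_⟩
  rcases eq_or_ne j i with rfl | h
  · simp [flipCoord_apply_self]
  · simp [flipCoord_apply_of_ne h, h]

theorem exists_eq_flipCoord_of_hammingDist_eq_one {y z : ι → Bool} (h : hammingDist y z = 1) :
    ∃ i, z = flipCoord i y := by
  obtain ⟨i, hi⟩ := Finset.card_eq_one.mp h
  have hdiff (j : ι) : y j ≠ z j ↔ j = i := by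
    simpa using Finset.ext_iff.mp hi j
  refine ⟨i, funext fun j => ?_⟩
  rcases eq_or_ne j i with rfl | hj
  · rw [flipCoord_apply_self]
    exact Bool.eq_not.mpr ((hdiff j).mpr rfl).symm
  · rw [flipCoord_apply_of_ne hj]
    exact (not_not.mp (mt (hdiff j).mp hj)).symm

open Finset in
theorem card_hammingDist_eq_one_le (y : ι → Bool) :
    #{z | hammingDist y z = 1} ≤ Fintype.card ι :=
  calc #{z | hammingDist y z = 1}
      ≤ #(univ.image fun i => flipCoord i y) := card_le_card fun z hz => by
        obtain ⟨i, rfl⟩ := exists_eq_flipCoord_of_hammingDist_eq_one (mem_filter.mp hz).2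
        exact mem_image_of_mem _ (mem_univ i)
    _ ≤ Fintype.card ι := card_image_le

open Finset in
theorem sum_sdiff_singleton_le_card_mul {f : (ι → Bool) → ℝ} {c : ℝ} (hc : 0 ≤ c)
    (y : ι → Bool)
    (hf : ∀ z, z ≠ y → f z ≤ if hammingDist y z = 1 then c else 0) :
    ∑ z ∈ univ \ {y}, f z ≤ Fintype.card ι * c :=
  calc ∑ z ∈ univ \ {y}, f z
      ≤ ∑ z ∈ univ \ {y}, if hammingDist y z = 1 then c else 0 :=
        sum_le_sum fun z hz => hf z (by simpa using hz)
    _ ≤ ∑ z, if hammingDist y z = 1 then c else 0 :=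
        sum_le_sum_of_subset_of_nonneg sdiff_subset fun _ _ _ => by positivity
    _ = #{z | hammingDist y z = 1} * c := by
        rw [sum_ite, sum_const_zero, add_zero, sum_const, nsmul_eq_mul]
    _ ≤ Fintype.card ι * c := by
        gcongr
        exact_mod_cast card_hammingDist_eq_one_le y

theorem hypercubeGenerator_apply_flipCoord (i : ι) (y z : ι → Bool) :
    hypercubeGenerator ι (flipCoord i y) (flipCoord i z) = hypercubeGenerator ι y z := by
  simp only [hypercubeGenerator, Matrix.of_apply, hammingDist_flipCoord_flipCoord,
    (flipCoord_involutive i).injective.eq_iff]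

theorem commute_hypercubeGenerator_permMatrix_flipPerm (i : ι) :
    Commute (hypercubeGenerator ι) ((flipPerm i).permMatrix ℝ) := by
  ext y z
  rw [Matrix.mul_permMatrix_apply, Matrix.permMatrix_mul_apply, flipPerm_symm, flipPerm_apply,
    flipPerm_apply, ← hypercubeGenerator_apply_flipCoord i, flipCoord_involutive]

theorem permMatrix_flipPerm_le_hypercubeGenerator (i : ι) {y z : ι → Bool} (hyz : y ≠ z) :
    (flipPerm i).permMatrix ℝ y z ≤ hypercubeGenerator ι y z := by
  rw [Equiv.Perm.permMatrix, PEquiv.toMatrix_toPEquiv_apply, Pi.single_apply, flipPerm_apply]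
  split_ifs with h
  · rw [h, hypercubeGenerator, Matrix.of_apply, hammingDist_flipCoord_self, if_pos rfl]
  · exact hypercubeGenerator_apply_nonneg_of_ne hyz

theorem exp_smul_hypercubeGenerator_flipCoord_le {s : ℝ} (hs : 0 < s) (i : ι)
    (y z : ι → Bool) :
    NormedSpace.exp (s • hypercubeGenerator ι) (flipCoord i y) z ≤
      (1 + s⁻¹) * NormedSpace.exp (s • hypercubeGenerator ι) y z :=
  Matrix.exp_smul_apply_perm_le (flipCoord_involutive i)
    (commute_hypercubeGenerator_permMatrix_flipPerm i)
    (fun _ _ => permMatrix_flipPerm_le_hypercubeGenerator i) hs y z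

end Hypercube

theorem reverse_rate_bound_general
    (n : ℕ) (T t : ℝ) (htT : t < T)
    (R : Matrix (Fin n → Bool) (Fin n → Bool) ℝ)
    (hR : ∀ y y' : Fin n → Bool,
      R y y' = if hammingDist y y' = 1 then (1 : ℝ)
               else if y = y' then -(n : ℝ) else 0)
    (q₀ : (Fin n → Bool) → ℝ)
    (hq₀ : ∀ y, 0 ≤ q₀ y)
    (q : ℝ → (Fin n → Bool) → ℝ)
    (hq : ∀ s, q s = (NormedSpace.exp (s • R)).mulVec q₀)
    (Rrev : ℝ → (Fin n → Bool) → (Fin n → Bool) → ℝ)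
    (hRrev : ∀ s y' y, Rrev s y' y = R y y' * (q (T - s) y' / q (T - s) y))
    (y : Fin n → Bool) :
    (∑ y' ∈ Finset.univ \ {y}, Rrev t y' y) ≤ n * (1 + (T - t)⁻¹) ∧
    (n : ℝ) * (1 + (T - t)⁻¹) ≤ 2 * n * max 1 (T - t)⁻¹ := by
  set s := T - t
  have hs : 0 < s := sub_pos.mpr htT
  obtain rfl : R = hypercubeGenerator (Fin n) := by
    ext y y'
    rw [hR, hypercubeGenerator, Matrix.of_apply, Fintype.card_fin]
  have hq_nonneg (z) : 0 ≤ q s z := by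
    rw [hq]
    exact Matrix.mulVec_nonneg (exp_smul_hypercubeGenerator_apply_nonneg hs.le) hq₀ z
  have hq_flip (i z) : q s (flipCoord i z) ≤ (1 + s⁻¹) * q s z := by
    rw [hq]
    exact Matrix.mulVec_apply_le_of_apply_le hq₀ (exp_smul_hypercubeGenerator_flipCoord_le hs i z)
  refine ⟨?_, ?_⟩
  · refine (sum_sdiff_singleton_le_card_mul (c := 1 + s⁻¹) (by positivity) y
      fun y' hne => ?_).trans_eq (by rw [Fintype.card_fin])
    rw [hRrev, hypercubeGenerator, Matrix.of_apply, if_neg hne.symm]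
    split_ifs with hd
    · obtain ⟨i, rfl⟩ := exists_eq_flipCoord_of_hammingDist_eq_one hd
      rw [one_mul]
      exact div_le_of_le_mul₀ (hq_nonneg y) (by positivity) (hq_flip i y)
    · rw [zero_mul]
  · rw [mul_comm 2, mul_assoc]
    gcongr
    linarith [le_max_left 1 s⁻¹, le_max_right 1 s⁻¹]

/-- Bound on the total outgoing reverse transition rate for the hypercube CTMC:
`∑_{y' ≠ y} R^←_t(y', y) ≤ n (1 + (T-t)⁻¹) ≤ 2 n max{1, (T-t)⁻¹}`. -/
theorem reverse_rate_bound
    (n : ℕ) (T t : ℝ) (ht0 : 0 ≤ t) (htT : t < T)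
    (R : Matrix (Fin n → Bool) (Fin n → Bool) ℝ)
    (hR : ∀ y y' : Fin n → Bool,
      R y y' = if hammingDist y y' = 1 then (1 : ℝ)
               else if y = y' then -(n : ℝ) else 0)
    (q₀ : (Fin n → Bool) → ℝ)
    (hq₀ : ∀ y, 0 ≤ q₀ y) (hsum : ∑ y, q₀ y = 1)
    (q : ℝ → (Fin n → Bool) → ℝ)
    (hq : ∀ s, q s = (NormedSpace.exp (s • R)).mulVec q₀)
    (Rrev : ℝ → (Fin n → Bool) → (Fin n → Bool) → ℝ)
    (hRrev : ∀ s y' y, Rrev s y' y = R y y' * (q (T - s) y' / q (T - s) y))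
    (y : Fin n → Bool) :
    (∑ y' ∈ Finset.univ \ {y}, Rrev t y' y) ≤ n * (1 + (T - t)⁻¹) ∧
    (n : ℝ) * (1 + (T - t)⁻¹) ≤ 2 * n * max 1 (T - t)⁻¹ :=
  reverse_rate_bound_general n T t htT R hR q₀ hq₀ q hq Rrev hRrev y
end
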